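/- arXiv:2307.00679 — 2 statements merged into one kernel-verified Lean document; each statement's English description precedes it below -/
import Mathlib

section
/- Let X be a complex Banach space, U ⊂ X open, and f_n : U → ℂ holomorphic functions such that for each compact K ⊂ U there is M_K > 0 with sup_{z∈K} |f_n(z)| ≤ M_K for all n. Then the map F : U → ℓ∞ given by F(z) = (f_n(z))_{n∈ℕ} is holomorphic. -/
open Set

instance : Fact ((1 : ENNReal) ≤ ⊤) := ⟨le_top⟩

/-!
Being bounded on compact sets, the `f n` are uniformly bounded by some `M` on a ball
`B(z₀, r) ⊆ U`: otherwise points `wⱼ → z₀` with `‖f nⱼ wⱼ‖ > j` would, together with `z₀`, form a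
compact subset of `U` on which the family is unbounded. On that ball the Schwarz lemma bounds
`‖Df_n(z₀)‖` by `2M/r` and the Taylor remainder `f_n(z₀ + h) - f_n(z₀) - Df_n(z₀) h` by
`4M(‖h‖/r)²`, uniformly in `n`. Hence `(Df_n(z₀))_n` is a bounded operator `X → ℓ∞` and it is the
Fréchet derivative of `F` at `z₀`.
-/

open Filter Metric Topology ENNReal

theorem exists_mem_nhds_forall_norm_le_of_isCompact {α ι E : Type*} [TopologicalSpace α]
    [FirstCountableTopology α] [SeminormedAddCommGroup E] {f : ι → α → E} {U : Set α} {x : α}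
    (hU : U ∈ 𝓝 x) (hbdd : ∀ K ⊆ U, IsCompact K → ∃ M, ∀ i, ∀ z ∈ K, ‖f i z‖ ≤ M) :
    ∃ V ∈ 𝓝 x, ∃ M, ∀ i, ∀ z ∈ V, ‖f i z‖ ≤ M := by
  obtain ⟨s, hs⟩ := (𝓝 x).exists_antitone_basis
  by_contra! hunbdd
  choose i w hw hlarge using fun n : ℕ => hunbdd _ (inter_mem (hs.mem n) hU) n
  have hK : IsCompact (insert x (range w)) :=
    (hs.tendsto fun n => (hw n).1).isCompact_insert_range
  obtain ⟨M, hM⟩ :=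
    hbdd _ (insert_subset (mem_of_mem_nhds hU) (range_subset_iff.2 fun n => (hw n).2)) hK
  obtain ⟨n, hn⟩ := exists_nat_ge M
  exact (hlarge n).not_ge ((hM _ _ (mem_insert_of_mem _ (mem_range_self n))).trans hn)

section CauchyEstimates

variable {X E : Type*} [NormedAddCommGroup X] [NormedSpace ℂ X] [NormedAddCommGroup E]
  [NormedSpace ℂ E] {g : X → E} {c z : X} {r M : ℝ}

theorem Complex.norm_fderiv_le_of_forall_mem_ball_norm_le (hd : DifferentiableOn ℂ g (ball c r))
    (hr : 0 < r) (hM : ∀ w ∈ ball c r, ‖g w‖ ≤ M) : ‖fderiv ℂ g c‖ ≤ 2 * M / r :=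
  Complex.norm_fderiv_le_div_of_mapsTo_ball hd
    (fun _ hw => mem_closedBall_iff_norm.2 <| two_mul M ▸ norm_sub_le_of_le (hM _ hw)
      (hM c (mem_ball_self hr))) hr

theorem Complex.norm_sub_sub_fderiv_le_of_forall_mem_ball_norm_le
    (hd : DifferentiableOn ℂ g (ball c r)) (hM : ∀ w ∈ ball c r, ‖g w‖ ≤ M) (hz : z ∈ ball c r) :
    ‖g z - g c - fderiv ℂ g c (z - c)‖ ≤ 4 * M * (‖z - c‖ / r) ^ 2 := by
  have hr : 0 < r := pos_of_mem_ball hz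
  -- the second-order Schwarz lemma applies to `g` minus its linearization at `c`
  set h : X → E := fun w => g w - fderiv ℂ g c (w - c)
  have hh w : h w - h c = g w - g c - fderiv ℂ g c (w - c) := by
    simp only [h, map_sub]
    abel
  have hhd : DifferentiableOn ℂ h (ball c r) := by fun_prop
  have hmaps : MapsTo h (ball c r) (closedBall (h c) (4 * M)) := by
    intro w hw
    rw [mem_closedBall_iff_norm]
    have hD := Complex.norm_fderiv_le_of_forall_mem_ball_norm_le hd hr hM
    have hwc : ‖w - c‖ ≤ r := (mem_ball_iff_norm.1 hw).le
    calc ‖h w - h c‖ ≤ ‖g w - g c‖ + ‖fderiv ℂ g c‖ * ‖w - c‖ :=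
          hh w ▸ (norm_sub_le _ _).trans (add_le_add_right ((fderiv ℂ g c).le_opNorm _) _)
      _ ≤ (M + M) + 2 * M / r * r :=
          add_le_add (norm_sub_le_of_le (hM w hw) (hM c (mem_ball_self hr)))
            (mul_le_mul hD hwc (norm_nonneg _) ((norm_nonneg _).trans hD))
      _ = 4 * M := by field_simp; ring
  have hlo : (h · - h c) =o[𝓝 c] fun w => ‖w - c‖ ^ 1 := by
    simpa [hh] using (hd.differentiableAt (ball_mem_nhds c hr)).hasFDerivAt.isLittleO.norm_right
  simpa [hh, dist_eq_norm] using
    Complex.dist_le_mul_div_pow_of_mapsTo_ball_of_isLittleO hhd hmaps hlo hz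

theorem Complex.eventually_forall_norm_sub_sub_fderiv_le {ι : Type*} {g : ι → X → E} (hr : 0 < r)
    (hd : ∀ i, DifferentiableOn ℂ (g i) (ball c r)) (hM : ∀ i, ∀ w ∈ ball c r, ‖g i w‖ ≤ M)
    {ε : ℝ} (hε : 0 < ε) :
    ∀ᶠ z in 𝓝 c, ∀ i, ‖g i z - g i c - fderiv ℂ (g i) c (z - c)‖ ≤ ε * ‖z - c‖ := by
  have hsmall : ∀ᶠ z in 𝓝 c, 4 * M / r ^ 2 * ‖z - c‖ < ε :=
    ((continuous_const.mul (continuous_id.sub continuous_const).norm).tendsto' c 0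
      (by simp)).eventually_lt_const hε
  filter_upwards [ball_mem_nhds c hr, hsmall] with z hz hzε i
  calc ‖g i z - g i c - fderiv ℂ (g i) c (z - c)‖ ≤ 4 * M * (‖z - c‖ / r) ^ 2 :=
        Complex.norm_sub_sub_fderiv_le_of_forall_mem_ball_norm_le (hd i) (hM i) hz
    _ = 4 * M / r ^ 2 * ‖z - c‖ * ‖z - c‖ := by field_simp
    _ ≤ ε * ‖z - c‖ := by gcongr

end CauchyEstimates

section Linfty

variable {ι 𝕜 X E : Type*} [NontriviallyNormedField 𝕜] [NormedAddCommGroup X] [NormedSpace 𝕜 X]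
  [NormedAddCommGroup E] [NormedSpace 𝕜 E]

noncomputable def ContinuousLinearMap.toLinfty (ℓ : ι → X →L[𝕜] E) {C : ℝ} (hC : 0 ≤ C)
    (hℓ : ∀ i, ‖ℓ i‖ ≤ C) : X →L[𝕜] lp (fun _ : ι => E) ∞ :=
  LinearMap.mkContinuous
    { toFun x := ⟨fun i => ℓ i x, memℓp_infty ⟨C * ‖x‖, by
        rintro _ ⟨i, rfl⟩
        exact (ℓ i).le_of_opNorm_le (hℓ i) x⟩⟩
      map_add' x y := lp.ext <| funext fun i => map_add (ℓ i) x y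
      map_smul' a x := lp.ext <| funext fun i => map_smul (ℓ i) a x }
    C fun x => lp.norm_le_of_forall_le (by positivity) fun i => (ℓ i).le_of_opNorm_le (hℓ i) x

@[simp]
theorem ContinuousLinearMap.toLinfty_apply (ℓ : ι → X →L[𝕜] E) {C : ℝ} (hC : 0 ≤ C)
    (hℓ : ∀ i, ‖ℓ i‖ ≤ C) (x : X) (i : ι) : toLinfty ℓ hC hℓ x i = ℓ i x :=
  rfl

theorem hasFDerivAt_lp_infty_of_uniform {G : X → lp (fun _ : ι => E) ∞} {g : ι → X → E}
    {ℓ : ι → X →L[𝕜] E} {c : X} {C : ℝ} (hC : 0 ≤ C) (hℓ : ∀ i, ‖ℓ i‖ ≤ C)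
    (hG : ∀ᶠ z in 𝓝 c, ∀ i, G z i = g i z)
    (hg : ∀ ε > 0, ∀ᶠ z in 𝓝 c, ∀ i, ‖g i z - g i c - ℓ i (z - c)‖ ≤ ε * ‖z - c‖) :
    HasFDerivAt G (ContinuousLinearMap.toLinfty ℓ hC hℓ) c := by
  refine .of_isLittleO <| Asymptotics.isLittleO_iff.2 fun ε hε => ?_
  filter_upwards [hG, hg ε hε] with z hGz hgz
  refine lp.norm_le_of_forall_le (by positivity) fun i => ?_
  simpa [hGz, hG.self_of_nhds] using hgz i

end Linfty

theorem holomorphic_into_linfty_general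
    {X : Type*} [NormedAddCommGroup X] [NormedSpace ℂ X]
    (U : Set X) (hU : IsOpen U)
    (f : ℕ → X → ℂ) (hf : ∀ n, DifferentiableOn ℂ (f n) U)
    (hbdd : ∀ K ⊆ U, IsCompact K → ∃ M > 0, ∀ n : ℕ, ∀ z ∈ K, ‖f n z‖ ≤ M)
    (F : X → lp (fun _ : ℕ => ℂ) ⊤)
    (hF : ∀ z ∈ U, ∀ n : ℕ, (F z : ∀ _ : ℕ, ℂ) n = f n z) :
    DifferentiableOn ℂ F U := by
  intro z₀ hz₀
  obtain ⟨V, hV, M, hM⟩ := exists_mem_nhds_forall_norm_le_of_isCompact (hU.mem_nhds hz₀)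
    fun K hKU hK => (hbdd K hKU hK).imp fun _ hM => hM.2
  obtain ⟨r, hr, hrVU⟩ := Metric.mem_nhds_iff.1 (inter_mem hV (hU.mem_nhds hz₀))
  have hd n : DifferentiableOn ℂ (f n) (ball z₀ r) := (hf n).mono (hrVU.trans inter_subset_right)
  have hMr n : ∀ w ∈ ball z₀ r, ‖f n w‖ ≤ M := fun w hw => hM n w (hrVU hw).1
  have hM0 : 0 ≤ M := (norm_nonneg _).trans (hMr 0 z₀ (mem_ball_self hr))
  have hG : ∀ᶠ z in 𝓝 z₀, ∀ n, F z n = f n z := eventually_of_mem (hU.mem_nhds hz₀) hF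
  have hF' := hasFDerivAt_lp_infty_of_uniform (by positivity)
    (fun n => Complex.norm_fderiv_le_of_forall_mem_ball_norm_le (hd n) hr (hMr n)) hG
    fun ε hε => Complex.eventually_forall_norm_sub_sub_fderiv_le hr hd hMr hε
  exact hF'.differentiableAt.differentiableWithinAt

/-- If `f_n : U → ℂ` are holomorphic functions on an open subset of a complex Banach space
which are uniformly bounded on each compact subset of `U`, then
`F(z) = (f_n(z))_n` is a holomorphic map `U → ℓ∞`. -/
theorem holomorphic_into_linfty
    {X : Type*} [NormedAddCommGroup X] [NormedSpace ℂ X] [CompleteSpace X]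
    (U : Set X) (hU : IsOpen U)
    (f : ℕ → X → ℂ) (hf : ∀ n, DifferentiableOn ℂ (f n) U)
    (hbdd : ∀ K ⊆ U, IsCompact K → ∃ M > 0, ∀ n : ℕ, ∀ z ∈ K, ‖f n z‖ ≤ M)
    (F : X → lp (fun _ : ℕ => ℂ) ⊤)
    (hF : ∀ z ∈ U, ∀ n : ℕ, (F z : ∀ _ : ℕ, ℂ) n = f n z) :
    DifferentiableOn ℂ F U :=
  holomorphic_into_linfty_general U hU f hf hbdd F hF
end

section
/- Let α ∈ ℂ with 0 < |α| < 1, let R > 0, r = |α|R, and ρ = (|α|/2)·min{|α|, 1 − |α|}. For λ ∈ 𝔻 set α̃ = α + ρλ and define φ_λ on the closed annulus {r ≤ |z| ≤ R} by φ_λ(t e^{iθ}) = ( ((R − t)/(R − r))·α̃ + ((t − r)/(R − r))·α )·t e^{iθ}. Then the radial profile s ↦ |α + (1−s)ρλ|·(r + s(R − r)) is strictly increasing on [0,1], and φ_λ is a homeomorphism from the annulus {r ≤ |z| ≤ R} onto the annulus {|α̃|r ≤ |z| ≤ |α|R} which restricts to z ↦ α̃z on |z| = r and to z ↦ αz on |z|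 = R. -/
open Set Complex

/-!
The interpolating map is radial, `φ z = g ‖z‖ * z` with `g t = α + (R - t) • v` affine in the
radius and `v = ρ l / (R - r)`. Such a map sends each circle `‖z‖ = t` onto the circle of radius
`‖g t‖ * t` (as `g t ≠ 0`), so it is a bijection between annuli as soon as the radial profile
`t ↦ ‖g t‖ * t` is strictly increasing and continuous. Along `[r, R]` the factor `t` grows at
unit rate while `‖g t‖ ≥ ‖α‖ - (R - r) ‖v‖` decreases at rate at most `‖v‖`; the choice of `ρ`
makes `‖v‖ * (2R - r) < ‖α‖`, so the growth wins.
-/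

theorem strictMonoOn_mul_self_of_le_add {f : ℝ → ℝ} {a b m L : ℝ} (ha : 0 ≤ a) (hL : 0 ≤ L)
    (hLm : L * b < m) (hm : ∀ t ∈ Icc a b, m ≤ f t)
    (hf : ∀ s ∈ Icc a b, ∀ t ∈ Icc a b, s < t → f s ≤ f t + L * (t - s)) :
    StrictMonoOn (fun t => f t * t) (Icc a b) := by
  intro s hs t ht hst
  have hgap : 0 < f t - L * s := by nlinarith [hm t ht, hs.2]
  calc f s * s ≤ (f t + L * (t - s)) * s := by gcongr; exacts [ha.trans hs.1, hf s hs t ht hst]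
    _ = f t * t - (t - s) * (f t - L * s) := by ring
    _ < f t * t := by nlinarith

section AffinePath

variable {E : Type*} [SeminormedAddCommGroup E] [NormedSpace ℝ E] {y v : E} {a b t : ℝ}

theorem norm_sub_mul_norm_le_norm_add_smul (ht : t ∈ Icc a b) :
    ‖y‖ - (b - a) * ‖v‖ ≤ ‖y + (b - t) • v‖ := by
  have hbt : 0 ≤ b - t := sub_nonneg.2 ht.2
  calc ‖y‖ - (b - a) * ‖v‖ ≤ ‖y‖ - (b - t) * ‖v‖ := by gcongr; exact ht.1
    _ = ‖y‖ - ‖-((b - t) • v)‖ := by rw [norm_neg, norm_smul, Real.norm_of_nonneg hbt]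
    _ ≤ ‖y - -((b - t) • v)‖ := norm_sub_norm_le _ _
    _ = ‖y + (b - t) • v‖ := by rw [sub_neg_eq_add]

theorem strictMonoOn_norm_add_smul_mul_self (ha : 0 ≤ a) (hv : ‖v‖ * (2 * b - a) < ‖y‖) :
    StrictMonoOn (fun t => ‖y + (b - t) • v‖ * t) (Icc a b) := by
  refine strictMonoOn_mul_self_of_le_add ha (norm_nonneg v) (m := ‖y‖ - (b - a) * ‖v‖)
    (by linarith) (fun t ht => norm_sub_mul_norm_le_norm_add_smul ht) fun s _ t _ hst => ?_
  calc ‖y + (b - s) • v‖ ≤ ‖y + (b - t) • v‖ + ‖y + (b - s) • v - (y + (b - t) • v)‖ :=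
        norm_le_norm_add_norm_sub' _ _
    _ = ‖y + (b - t) • v‖ + ‖v‖ * (t - s) := by
        rw [add_sub_add_left_eq_sub, ← sub_smul, sub_sub_sub_cancel_left, norm_smul,
          Real.norm_of_nonneg (sub_nonneg.2 hst.le), mul_comm]

end AffinePath

theorem bijOn_smul_norm_annulus {𝕜 E : Type*} [NormedField 𝕜] [SeminormedAddCommGroup E]
    [NormedSpace 𝕜 E] {g : ℝ → 𝕜} {a b : ℝ} (hab : a ≤ b) (hg : ContinuousOn g (Icc a b))
    (hg0 : ∀ t ∈ Icc a b, g t ≠ 0) (hmono : StrictMonoOn (fun t => ‖g t‖ * t) (Icc a b)) :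
    BijOn (fun z : E => g ‖z‖ • z) {z | a ≤ ‖z‖ ∧ ‖z‖ ≤ b}
      {w | ‖g a‖ * a ≤ ‖w‖ ∧ ‖w‖ ≤ ‖g b‖ * b} := by
  have hnorm : ∀ z : E, ‖g ‖z‖ • z‖ = ‖g ‖z‖‖ * ‖z‖ := fun z => norm_smul _ _
  refine ⟨fun z hz => ?_, fun z₁ hz₁ z₂ hz₂ heq => ?_, fun w hw => ?_⟩
  · rw [mem_ofPred_eq, hnorm]
    exact ⟨hmono.monotoneOn (left_mem_Icc.2 hab) hz hz.1,
      hmono.monotoneOn hz (right_mem_Icc.2 hab) hz.2⟩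
  · have hr : ‖z₁‖ = ‖z₂‖ := hmono.injOn hz₁ hz₂ <| by
      simpa only [hnorm] using congrArg norm heq
    simp only [hr] at heq
    exact smul_right_injective E (hg0 _ hz₂) heq
  · obtain ⟨t, ht, hwt⟩ := intermediate_value_Icc hab (hg.norm.mul continuousOn_id) hw
    have hgt : ‖g t‖ ≠ 0 := norm_ne_zero_iff.2 (hg0 t ht)
    have hzt : ‖(g t)⁻¹ • w‖ = t := by
      rw [norm_smul, norm_inv, ← hwt, Pi.mul_apply, id, inv_mul_cancel_left₀ hgt]
    refine ⟨(g t)⁻¹ • w, show _ ∧ _ by rw [hzt]; exact ht, ?_⟩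
    simp only [hzt, smul_inv_smul₀ (hg0 t ht)]

theorem norm_interpolation_slope_mul_lt {α l : ℂ} {R : ℝ} (hα0 : 0 < ‖α‖) (hα1 : ‖α‖ < 1)
    (hR : 0 < R) (hl : ‖l‖ ≤ 1) :
    ‖((‖α‖ / 2 * min ‖α‖ (1 - ‖α‖) / (R - ‖α‖ * R) : ℝ) : ℂ) * l‖ * (2 * R - ‖α‖ * R) < ‖α‖ := by
  set a := ‖α‖
  set ρ := a / 2 * min a (1 - a)
  have h1a : 0 < 1 - a := sub_pos.2 hα1
  have hρ0 : 0 ≤ ρ := mul_nonneg (by positivity) (le_min hα0.le h1a.le)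
  have hρ : ρ * (2 - a) < a * (1 - a) := by
    have : ρ ≤ a / 2 * (1 - a) := mul_le_mul_of_nonneg_left (min_le_right _ _) (by positivity)
    nlinarith [mul_pos (mul_pos hα0 hα0) h1a]
  have hρl : ρ * ‖l‖ * (2 - a) ≤ ρ * (2 - a) :=
    mul_le_mul_of_nonneg_right (mul_le_of_le_one_right hρ0 hl) (by linarith)
  rw [norm_mul, norm_real, show R - a * R = R * (1 - a) by ring,
    Real.norm_of_nonneg (div_nonneg hρ0 (by positivity)), div_mul_eq_mul_div, div_mul_eq_mul_div,
    div_lt_iff₀ (by positivity)]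
  nlinarith [mul_lt_mul_of_pos_left hρ hR, mul_le_mul_of_nonneg_left hρl hR.le]

/-- Quasiconformal interpolation between `z ↦ α̃z` on `|z| = r` and `z ↦ αz` on `|z| = R`:
the radial image profile is strictly increasing, and the interpolating map is a continuous
bijection of the closed annulus `{r ≤ |z| ≤ R}` onto `{|α̃|r ≤ |z| ≤ |α|R}` with the stated
boundary values. -/
theorem annulus_interpolation
    (α : ℂ) (hα0 : 0 < ‖α‖) (hα1 : ‖α‖ < 1)
    (R : ℝ) (hR : 0 < R)
    (r ρ : ℝ) (hr : r = ‖α‖ * R)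
    (hρ : ρ = ‖α‖ / 2 * min (‖α‖) (1 - ‖α‖))
    (l : ℂ) (hl : ‖l‖ < 1)
    (αt : ℂ) (hαt : αt = α + (ρ : ℂ) * l)
    (φ : ℂ → ℂ)
    (hφ : ∀ z : ℂ, φ z =
      ((((R - ‖z‖) / (R - r) : ℝ) : ℂ) * αt +
        (((‖z‖ - r) / (R - r) : ℝ) : ℂ) * α) * z) :
    StrictMonoOn
      (fun s : ℝ => ‖α + (((1 - s) * ρ : ℝ) : ℂ) * l‖ * (r + s * (R - r)))
      (Set.Icc 0 1) ∧
    Set.BijOn φ {z : ℂ | r ≤ ‖z‖ ∧ ‖z‖ ≤ R}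
      {z : ℂ | ‖αt‖ * r ≤ ‖z‖ ∧ ‖z‖ ≤ ‖α‖ * R} ∧
    ContinuousOn φ {z : ℂ | r ≤ ‖z‖ ∧ ‖z‖ ≤ R} ∧
    (∀ z : ℂ, ‖z‖ = r → φ z = αt * z) ∧
    (∀ z : ℂ, ‖z‖ = R → φ z = α * z) := by
  have hr0 : 0 < r := hr ▸ mul_pos hα0 hR
  have hrR : r < R := by rw [hr]; nlinarith
  have hRr : (R : ℂ) - r ≠ 0 := by exact_mod_cast (sub_pos.2 hrR).ne'
  set v : ℂ := ((ρ / (R - r) : ℝ) : ℂ) * l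
  set g : ℝ → ℂ := fun t => α + (R - t) • v
  have hφg (z : ℂ) : φ z = g ‖z‖ * z := by
    simp only [hφ, hαt, g, v, Complex.real_smul]; push_cast; field_simp; ring
  have hgr : g r = αt := by simp only [g, v, hαt, Complex.real_smul]; push_cast; field_simp
  have hgR : g R = α := by simp [g]
  have hv : ‖v‖ * (2 * R - r) < ‖α‖ := by subst hr hρ; exact norm_interpolation_slope_mul_lt hα0 hα1 hR hl.le
  have hmono := strictMonoOn_norm_add_smul_mul_self hr0.le hv
  have hg0 (t : ℝ) (ht : t ∈ Icc r R) : g t ≠ 0 := norm_pos_iff.mp <|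
    (norm_sub_mul_norm_le_norm_add_smul ht).trans_lt' (by nlinarith [norm_nonneg v])
  refine ⟨?_, ?_, ?_, fun z hz => by rw [hφg, hz, hgr], fun z hz => by rw [hφg, hz, hgR]⟩
  · have hprofile (s : ℝ) : α + (((1 - s) * ρ : ℝ) : ℂ) * l = g (r + s * (R - r)) := by
      simp only [g, v, Complex.real_smul]; push_cast; field_simp; ring
    simp only [hprofile]
    exact hmono.comp (((strictMono_mul_right_of_pos (sub_pos.2 hrR)).const_add r).strictMonoOn _)
      fun s hs => ⟨by nlinarith [hs.1], by nlinarith [hs.2]⟩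
  · have hbij := bijOn_smul_norm_annulus (E := ℂ) hrR.le (by fun_prop) hg0 hmono
    rw [hgr, hgR] at hbij
    exact hbij.congr fun z _ => (hφg z).symm
  · obtain rfl : φ = _ := funext hφ
    fun_prop
end
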